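/- For every fixed z > 0, the sequence of consecutive-generation ratios satisfies γ_k(z) · B · (k − n/2 + 1)/(k + 1) → 1 as k → ∞; that is, γ_k(z) ∼ (1/B)·(1 + n/(2ν)) with ν = k − n/2 + 1 as the generation number k grows. In particular γ_k(z) → 1/B, so at any fixed spatial point the rank distribution is asymptotically exponential with index B for small ranks. -/

import Mathlib

open Real MeasureTheory Set Filter Topology

/-! With `a = k - n/2` and `c = z²/(4λ)`, `𝒜_k(z)` is an explicit factor times
`J_c(a) = ∫₀^∞ s^a e^{-λs - c/s} ds`, and `J_0(a) = Γ(a+1) λ^{-(a+1)}` satisfies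
`λ J_0(a+1) = (a+1) J_0(a)`. So everything reduces to `J_c(a) / J_0(a) → 1` as `a → ∞`.
The weight `s^a e^{-λs}` puts vanishing relative mass on any interval `(0, M]` (compare it
with the mass on `(2M, 2M+1]`: the ratio is at most `M e^{λ(2M+1)} 2^{-a}`), while on `(M, ∞)`
the factor `e^{-c/s}` is at least `e^{-c/M}`, which is close to `1` for large `M`. -/

/-- The steady-state generation-`k` density in the normalized distance
`z = |x|√(λ/D)` from the origin:
`𝒜_k(z) = (μ(λB)^k/(k!(4πD)^{n/2})) ∫₀^∞ s^{k−n/2} exp(−λs − z²/(4λs)) ds`. -/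
noncomputable def steadyDensity (n : ℕ) (lam D B mu : ℝ) (k : ℕ) (z : ℝ) : ℝ :=
  (mu * (lam * B) ^ k / ((Nat.factorial k : ℝ) * (4 * π * D) ^ ((n : ℝ) / 2))) *
    ∫ s in Set.Ioi (0:ℝ),
      s ^ ((k : ℝ) - (n : ℝ) / 2) * Real.exp (-lam * s - z ^ 2 / (4 * lam * s))

/-- The consecutive-generation ratio `γ_k(z) = 𝒜_k(z)/𝒜_{k+1}(z)`. -/
noncomputable def genRatio (n : ℕ) (lam D B mu : ℝ) (k : ℕ) (z : ℝ) : ℝ :=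
  steadyDensity n lam D B mu k z / steadyDensity n lam D B mu (k + 1) z

noncomputable def expInvIntegral (lam c a : ℝ) : ℝ :=
  ∫ s in Ioi (0 : ℝ), s ^ a * exp (-lam * s - c / s)

section

variable {lam c a : ℝ}

lemma expInvIntegral_zero_eq_integral (lam a : ℝ) :
    expInvIntegral lam 0 a = ∫ s in Ioi (0 : ℝ), s ^ a * exp (-lam * s) := by
  simp [expInvIntegral]

lemma expInvIntegral_zero (hlam : 0 < lam) (ha : -1 < a) :
    expInvIntegral lam 0 a = lam ^ (-(a + 1)) * Gamma (a + 1) := by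
  simpa [expInvIntegral_zero_eq_integral] using
    integral_rpow_mul_exp_neg_mul_rpow one_pos ha hlam

lemma lam_mul_expInvIntegral_zero_add_one (hlam : 0 < lam) (ha : -1 < a) :
    lam * expInvIntegral lam 0 (a + 1) = (a + 1) * expInvIntegral lam 0 a := by
  rw [expInvIntegral_zero hlam (by linarith), expInvIntegral_zero hlam ha,
    Gamma_add_one (by linarith), show -(a + 1 + 1) = -(a + 1) - 1 by ring,
    rpow_sub_one hlam.ne']
  field_simp

lemma integrableOn_rpow_mul_exp_neg_mul (hlam : 0 < lam) (ha : -1 < a) :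
    IntegrableOn (fun s : ℝ => s ^ a * exp (-lam * s)) (Ioi 0) := by
  simpa using integrableOn_rpow_mul_exp_neg_mul_rpow ha one_pos hlam

lemma rpow_mul_exp_sub_div_le (hc : 0 ≤ c) {s : ℝ} (hs : 0 < s) :
    s ^ a * exp (-lam * s - c / s) ≤ s ^ a * exp (-lam * s) := by
  gcongr
  linarith [div_nonneg hc hs.le]

lemma integrableOn_rpow_mul_exp_sub_div (hlam : 0 < lam) (hc : 0 ≤ c) (ha : -1 < a) :
    IntegrableOn (fun s : ℝ => s ^ a * exp (-lam * s - c / s)) (Ioi 0) := by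
  refine (integrableOn_rpow_mul_exp_neg_mul hlam ha).mono'
    (by fun_prop : Measurable _).aestronglyMeasurable ?_
  filter_upwards [ae_restrict_mem measurableSet_Ioi] with s hs
  rw [norm_of_nonneg (mul_nonneg (rpow_nonneg (le_of_lt hs) a) (exp_pos _).le)]
  exact rpow_mul_exp_sub_div_le hc hs

lemma expInvIntegral_pos (hlam : 0 < lam) (hc : 0 ≤ c) (ha : -1 < a) :
    0 < expInvIntegral lam c a := by
  rw [expInvIntegral, setIntegral_pos_iff_support_of_nonneg_ae
    (ae_restrict_of_forall_mem measurableSet_Ioi fun s hs =>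
      mul_nonneg (rpow_nonneg (le_of_lt hs) a) (exp_pos _).le)
    (integrableOn_rpow_mul_exp_sub_div hlam hc ha)]
  have hsupp :
      Ioi 0 ⊆ Function.support (fun s : ℝ => s ^ a * exp (-lam * s - c / s)) ∩ Ioi 0 :=
    fun s hs => ⟨(mul_pos (rpow_pos_of_pos hs a) (exp_pos _)).ne', hs⟩
  exact (measure_mono hsupp).trans_lt' (by simp)

lemma expInvIntegral_le_expInvIntegral_zero (hlam : 0 < lam) (hc : 0 ≤ c) (ha : -1 < a) :
    expInvIntegral lam c a ≤ expInvIntegral lam 0 a := by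
  rw [expInvIntegral, expInvIntegral_zero_eq_integral]
  exact setIntegral_mono_on (integrableOn_rpow_mul_exp_sub_div hlam hc ha)
    (integrableOn_rpow_mul_exp_neg_mul hlam ha) measurableSet_Ioi
    fun s hs => rpow_mul_exp_sub_div_le hc hs

lemma rpow_mul_exp_le_expInvIntegral_zero (hlam : 0 < lam) (ha : 0 ≤ a) {t : ℝ} (ht : 0 < t) :
    t ^ a * exp (-(lam * (t + 1))) ≤ expInvIntegral lam 0 a := by
  have hint := integrableOn_rpow_mul_exp_neg_mul hlam (a := a) (by linarith)
  have hsub : Ioc t (t + 1) ⊆ Ioi 0 := fun s hs => ht.trans hs.1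
  rw [expInvIntegral_zero_eq_integral]
  calc t ^ a * exp (-(lam * (t + 1)))
      ≤ ∫ s in Ioc t (t + 1), s ^ a * exp (-lam * s) := by
        have hlow : ∀ s ∈ Ioc t (t + 1),
            t ^ a * exp (-(lam * (t + 1))) ≤ s ^ a * exp (-lam * s) := fun s hs => by
            have hs0 : 0 < s := ht.trans hs.1
            gcongr
            · exact hs.1.le
            · nlinarith [hs.2]
        simpa using setIntegral_ge_of_const_le_real measurableSet_Ioc measure_Ioc_lt_top.ne hlow
          (hint.mono_set hsub)
    _ ≤ ∫ s in Ioi 0, s ^ a * exp (-lam * s) :=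
        setIntegral_mono_set hint (ae_restrict_of_forall_mem measurableSet_Ioi
          fun s hs => mul_nonneg (rpow_nonneg (le_of_lt hs) a) (exp_pos _).le) hsub.eventuallyLE

lemma setIntegral_Ioc_le_mul_expInvIntegral_zero (hlam : 0 < lam) (ha : 0 ≤ a) {M : ℝ}
    (hM : 0 < M) :
    ∫ s in Ioc 0 M, s ^ a * exp (-lam * s) ≤
      M * exp (lam * (2 * M + 1)) * (1 / 2) ^ a * expInvIntegral lam 0 a := by
  have hcancel : (1 / 2 : ℝ) ^ a * (2 * M) ^ a * (exp (lam * (2 * M + 1)) *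
      exp (-(lam * (2 * M + 1)))) = M ^ a := by
    rw [← mul_rpow (by norm_num) (by positivity), ← exp_add, add_neg_cancel, exp_zero]; ring_nf
  calc ∫ s in Ioc 0 M, s ^ a * exp (-lam * s)
      ≤ ∫ s in Ioc 0 M, M ^ a :=
        setIntegral_mono_on
          ((integrableOn_rpow_mul_exp_neg_mul hlam (a := a) (by linarith)).mono_set
            Ioc_subset_Ioi_self)
          (integrableOn_const measure_Ioc_lt_top.ne) measurableSet_Ioc fun s hs => by
            calc s ^ a * exp (-lam * s) ≤ M ^ a * 1 := by
                  gcongr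
                  · exact hs.1.le
                  · exact hs.2
                  · exact exp_le_one_iff.2 (by nlinarith [hs.1])
              _ = M ^ a := mul_one _
    _ = M * exp (lam * (2 * M + 1)) * (1 / 2) ^ a *
          ((2 * M) ^ a * exp (-(lam * (2 * M + 1)))) := by
        rw [setIntegral_const, measureReal_def, Real.volume_Ioc,
          ENNReal.toReal_ofReal (by linarith), smul_eq_mul, sub_zero]
        linear_combination (-M) * hcancel
    _ ≤ _ := by gcongr; exact rpow_mul_exp_le_expInvIntegral_zero hlam ha (by positivity)

lemma exp_neg_div_mul_sub_le_expInvIntegral (hlam : 0 < lam) (hc : 0 ≤ c) (ha : -1 < a) {M : ℝ}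
    (hM : 0 < M) :
    exp (-(c / M)) * (expInvIntegral lam 0 a - ∫ s in Ioc 0 M, s ^ a * exp (-lam * s)) ≤
      expInvIntegral lam c a := by
  have hG := integrableOn_rpow_mul_exp_neg_mul hlam ha
  have hJ := integrableOn_rpow_mul_exp_sub_div hlam hc ha
  rw [expInvIntegral_zero_eq_integral, ← Ioc_union_Ioi_eq_Ioi hM.le,
    setIntegral_union (Ioc_disjoint_Ioi le_rfl) measurableSet_Ioi
      (hG.mono_set Ioc_subset_Ioi_self) (hG.mono_set (Ioi_subset_Ioi hM.le)),
    add_sub_cancel_left, ← integral_const_mul, expInvIntegral]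
  calc ∫ s in Ioi M, exp (-(c / M)) * (s ^ a * exp (-lam * s))
      ≤ ∫ s in Ioi M, s ^ a * exp (-lam * s - c / s) := by
        refine setIntegral_mono_on ((hG.mono_set (Ioi_subset_Ioi hM.le)).const_mul _)
          (hJ.mono_set (Ioi_subset_Ioi hM.le)) measurableSet_Ioi fun s hs => ?_
        have hs0 : 0 < s := hM.trans hs
        calc exp (-(c / M)) * (s ^ a * exp (-lam * s)) = s ^ a * exp (-lam * s - c / M) := by
              rw [sub_eq_add_neg, exp_add]; ring
          _ ≤ _ := by gcongr; exact hs.le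
    _ ≤ ∫ s in Ioi 0, s ^ a * exp (-lam * s - c / s) :=
        setIntegral_mono_set hJ (ae_restrict_of_forall_mem measurableSet_Ioi
          fun s hs => mul_nonneg (rpow_nonneg (le_of_lt hs) a) (exp_pos _).le)
          (Ioi_subset_Ioi hM.le).eventuallyLE

lemma tendsto_expInvIntegral_div_expInvIntegral_zero (hlam : 0 < lam) (hc : 0 ≤ c) :
    Tendsto (fun a => expInvIntegral lam c a / expInvIntegral lam 0 a) atTop (𝓝 1) := by
  refine tendsto_order.2 ⟨fun b hb => ?_, fun b hb => ?_⟩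
  · have hexp : Tendsto (fun M : ℝ => exp (-(c / M))) atTop (𝓝 1) := by
      have h0 : Tendsto (fun M : ℝ => -(c / M)) atTop (𝓝 0) := by
        simpa using ((tendsto_const_nhds (x := c)).div_atTop tendsto_id).neg
      exact tendsto_exp_nhds_zero_nhds_one.comp h0
    obtain ⟨M, hM, hbM⟩ :=
      ((eventually_gt_atTop 0).and (hexp.eventually (lt_mem_nhds hb))).exists
    set C := M * exp (lam * (2 * M + 1))
    have hsmall : Tendsto (fun a : ℝ => exp (-(c / M)) * (1 - C * (1 / 2) ^ a)) atTop
        (𝓝 (exp (-(c / M)))) := by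
      simpa using ((tendsto_rpow_atTop_of_base_lt_one (1 / 2 : ℝ) (by norm_num)
        (by norm_num)).const_mul C).const_sub 1 |>.const_mul (exp (-(c / M)))
    filter_upwards [hsmall.eventually (lt_mem_nhds hbM), eventually_ge_atTop 0] with a hba ha
    have hG := expInvIntegral_pos hlam le_rfl (a := a) (by linarith)
    refine hba.trans_le ((le_div_iff₀ hG).2 ?_)
    calc exp (-(c / M)) * (1 - C * (1 / 2) ^ a) * expInvIntegral lam 0 a
        = exp (-(c / M)) *
            (expInvIntegral lam 0 a - C * (1 / 2) ^ a * expInvIntegral lam 0 a) := by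
          ring
      _ ≤ exp (-(c / M)) *
            (expInvIntegral lam 0 a - ∫ s in Ioc 0 M, s ^ a * exp (-lam * s)) := by
          gcongr
          exact setIntegral_Ioc_le_mul_expInvIntegral_zero hlam ha hM
      _ ≤ expInvIntegral lam c a := exp_neg_div_mul_sub_le_expInvIntegral hlam hc (by linarith) hM
  · filter_upwards [eventually_gt_atTop (-1)] with a ha
    exact ((div_le_one (expInvIntegral_pos hlam le_rfl ha)).2
      (expInvIntegral_le_expInvIntegral_zero hlam hc ha)).trans_lt hb

lemma tendsto_add_one_div_mul_expInvIntegral_div (hlam : 0 < lam) (hc : 0 ≤ c) :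
    Tendsto (fun a => (a + 1) / lam * (expInvIntegral lam c a / expInvIntegral lam c (a + 1)))
      atTop (𝓝 1) := by
  have h := tendsto_expInvIntegral_div_expInvIntegral_zero hlam hc
  have hq : Tendsto (fun a => expInvIntegral lam c a / expInvIntegral lam 0 a /
      (expInvIntegral lam c (a + 1) / expInvIntegral lam 0 (a + 1))) atTop (𝓝 1) := by
    have h' := h.div (h.comp (tendsto_atTop_add_const_right atTop (1 : ℝ) tendsto_id)) one_ne_zero
    rw [div_one] at h'
    exact h'
  refine hq.congr' ?_
  filter_upwards [eventually_gt_atTop (-1)] with a ha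
  have hrec := lam_mul_expInvIntegral_zero_add_one hlam ha
  have := expInvIntegral_pos hlam le_rfl ha
  have := expInvIntegral_pos hlam le_rfl (a := a + 1) (by linarith)
  have := expInvIntegral_pos hlam hc (a := a + 1) (by linarith)
  field_simp
  linear_combination expInvIntegral lam c a * hrec

end

lemma steadyDensity_eq (n : ℕ) (lam D B mu : ℝ) (k : ℕ) (z : ℝ) :
    steadyDensity n lam D B mu k z =
      mu * (lam * B) ^ k / ((Nat.factorial k : ℝ) * (4 * π * D) ^ ((n : ℝ) / 2)) *
        expInvIntegral lam (z ^ 2 / (4 * lam)) ((k : ℝ) - n / 2) := by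
  simp only [steadyDensity, expInvIntegral, div_div]

lemma genRatio_eq {n : ℕ} {lam D B mu : ℝ} (hlam : lam ≠ 0) (hD : 0 < D) (hB : B ≠ 0)
    (hmu : mu ≠ 0) (k : ℕ) (z : ℝ) :
    genRatio n lam D B mu k z = (k + 1) / (lam * B) *
      (expInvIntegral lam (z ^ 2 / (4 * lam)) ((k : ℝ) - n / 2) /
        expInvIntegral lam (z ^ 2 / (4 * lam)) ((k : ℝ) - n / 2 + 1)) := by
  have hK : (4 * π * D) ^ ((n : ℝ) / 2) ≠ 0 := (rpow_pos_of_pos (by positivity) _).ne'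
  rw [genRatio, steadyDensity_eq, steadyDensity_eq, mul_div_mul_comm]
  congr 1
  · rw [Nat.factorial_succ, pow_succ]
    push_cast
    field_simp
  · push_cast
    ring_nf

theorem genRatio_large_generation_general
    (n : ℕ) (lam D B mu : ℝ)
    (hlam : 0 < lam) (hD : 0 < D) (hB : 0 < B) (hmu : 0 < mu)
    (z : ℝ) :
    Filter.Tendsto
      (fun k : ℕ => genRatio n lam D B mu k z * B *
        ((k : ℝ) - (n : ℝ) / 2 + 1) / ((k : ℝ) + 1))
      atTop (nhds 1) ∧
    Filter.Tendsto (fun k : ℕ => genRatio n lam D B mu k z) atTop (nhds (1 / B)) := by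
  have hshift : Tendsto (fun k : ℕ => (k : ℝ) - n / 2) atTop atTop :=
    tendsto_atTop_add_const_right _ _ tendsto_natCast_atTop_atTop
  have hscaled : Tendsto (fun k : ℕ => genRatio n lam D B mu k z * B *
      ((k : ℝ) - (n : ℝ) / 2 + 1) / ((k : ℝ) + 1)) atTop (𝓝 1) := by
    refine ((tendsto_add_one_div_mul_expInvIntegral_div hlam (c := z ^ 2 / (4 * lam))
      (by positivity)).comp hshift).congr fun k => ?_
    rw [Function.comp_apply, genRatio_eq hlam.ne' hD hB.ne' hmu.ne']
    field_simp
  refine ⟨hscaled, ?_⟩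
  have hfrac : Tendsto (fun k : ℕ => ((k : ℝ) + 1) / (k - n / 2 + 1)) atTop (𝓝 1) := by
    refine (div_one (1 : ℝ) ▸ tendsto_add_mul_div_add_mul_atTop_nhds (1 : ℝ) (1 - n / 2) 1
      one_ne_zero).congr fun k => ?_
    ring
  have hlim := (hscaled.mul hfrac).div_const B
  rw [one_mul] at hlim
  refine hlim.congr' ?_
  filter_upwards [eventually_ge_atTop n] with k hk
  have hpos : (0 : ℝ) < k - n / 2 + 1 := by
    have : (n : ℝ) ≤ k := by exact_mod_cast hk
    linarith [(Nat.cast_nonneg n : (0 : ℝ) ≤ n)]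
  generalize (k : ℝ) - n / 2 + 1 = ν at hpos ⊢
  field_simp

/-- Small-size self-similarity: for fixed `z > 0`,
`γ_k(z) B (k − n/2 + 1)/(k + 1) → 1` as `k → ∞`, i.e.
`γ_k(z) ∼ (1/B)(1 + n/(2ν))` with `ν = k − n/2 + 1`; in particular
`γ_k(z) → 1/B`. -/
theorem genRatio_large_generation
    (n : ℕ) (hn : 1 ≤ n) (lam D B mu : ℝ)
    (hlam : 0 < lam) (hD : 0 < D) (hB : 0 < B) (hmu : 0 < mu)
    (z : ℝ) (hz : 0 < z) :
    Filter.Tendsto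
      (fun k : ℕ => genRatio n lam D B mu k z * B *
        ((k : ℝ) - (n : ℝ) / 2 + 1) / ((k : ℝ) + 1))
      atTop (nhds 1) ∧
    Filter.Tendsto (fun k : ℕ => genRatio n lam D B mu k z) atTop (nhds (1 / B)) :=
  genRatio_large_generation_general n lam D B mu hlam hD hB hmu z
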